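/- arXiv:1207.5029 — 2 statements merged into one kernel-verified Lean document; each statement's English description precedes it below -/
import Mathlib

section
/- For every set X ⊆ ℝ of positive Lebesgue outer measure, there exists a subset S ⊆ X of positive Lebesgue outer measure such that the distance between any two distinct points of S is irrational. -/
open MeasureTheory

noncomputable section

private def ratSub : AddSubgroup ℝ := AddMonoidHom.range (Rat.castHom ℝ).toAddMonoidHom

private lemma mem_ratSub {x : ℝ} : x ∈ ratSub ↔ ∃ q : ℚ, (q : ℝ) = x := by
  simp [ratSub, AddMonoidHom.mem_range]

private def rep (x : ℝ) : ℝ := (QuotientAddGroup.mk x : ℝ ⧸ ratSub).out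

private lemma rep_diff (x : ℝ) : x - rep x ∈ ratSub := by
  have h : (QuotientAddGroup.mk (rep x) : ℝ ⧸ ratSub) = QuotientAddGroup.mk x :=
    Quotient.out_eq _
  have := (QuotientAddGroup.eq (s := ratSub)).mp h
  simpa [neg_add_eq_sub] using this

private lemma rep_eq_of_diff_mem {x y : ℝ} (h : x - y ∈ ratSub) : rep x = rep y := by
  have : (QuotientAddGroup.mk x : ℝ ⧸ ratSub) = QuotientAddGroup.mk y := by
    rw [QuotientAddGroup.eq]
    simpa [neg_add_eq_sub] using ratSub.neg_mem h
  simp [rep, this]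

theorem positive_subset_avoiding_rational_distances (X : Set ℝ) (hX : 0 < volume X) :
    ∃ S ⊆ X, 0 < volume S ∧ ∀ x ∈ S, ∀ y ∈ S, x ≠ y → Irrational (x - y) := by
  set S : ℚ → Set ℝ := fun q => {x ∈ X | x - rep x = (q : ℝ)} with hS
  have hcover : X ⊆ ⋃ q : ℚ, S q := by
    intro x hx
    obtain ⟨q, hq⟩ := mem_ratSub.mp (rep_diff x)
    exact Set.mem_iUnion.mpr ⟨q, hx, hq.symm⟩
  have hpos : ∃ q : ℚ, 0 < volume (S q) := by
    by_contra h
    push_neg at h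
    have hz : ∀ q : ℚ, volume (S q) = 0 := fun q => le_antisymm (h q) bot_le
    have : volume X ≤ ∑' q : ℚ, volume (S q) :=
      le_trans (measure_mono hcover) (measure_iUnion_le S)
    simp [hz] at this
    exact absurd this hX.ne'
  obtain ⟨q, hq⟩ := hpos
  refine ⟨S q, fun x hx => hx.1, hq, ?_⟩
  rintro x ⟨hxX, hxq⟩ y ⟨hyX, hyq⟩ hxy
  intro ⟨r, hr⟩
  -- x - y rational ⇒ rep x = rep y ⇒ x = y
  have hmem : x - y ∈ ratSub := mem_ratSub.mpr ⟨r, hr⟩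
  have hrep : rep x = rep y := rep_eq_of_diff_mem hmem
  apply hxy
  have : x - rep x = y - rep y := by rw [hxq, hyq]
  rw [hrep] at this
  linarith [sub_left_injective.eq_iff.mp this]

end
end

section
/- Suppose g : S → ℝ (S ⊆ ℝ) is fullness preserving on each member of a finite partition S = S₁ ⊔ ... ⊔ S_n where the images g[S₁], ..., g[S_n] are pairwise disjoint with pairwise disjoint (up to null sets) measurable envelopes. If W ⊆ S satisfies μ*(W ∩ S_i) = μ*(S_i) for each i, then μ*(g[W]) = μ*(g[S]). -/
/-!
Split `W` and `S` along the partition. Since `W ∩ P i` is full in `P i`, fullness preservation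
gives `g '' (W ∩ P i)` the outer measure of `g '' P i`; outer measure is additive over families of sets that sit in
almost disjoint measurable envelopes, so the outer measures of `g '' W` and `g '' S` are the same
sum.
-/

open MeasureTheory

theorem measure_iUnion_of_subset_aedisjoint_envelopes {α ι : Type*} [MeasurableSpace α]
    [Countable ι] (μ : Measure α) {A E : ι → Set α} (hE : ∀ i, NullMeasurableSet (E i) μ)
    (hAE : ∀ i, A i ⊆ E i) (hEdisj : Pairwise (Function.onFun (AEDisjoint μ) E)) :
    μ (⋃ i, A i) = ∑' i, μ (A i) := by
  refine le_antisymm (measure_iUnion_le A) ?_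
  -- Cut the envelopes down to a measurable hull `H` of the union; the pieces stay envelopes.
  set H := toMeasurable μ (⋃ i, A i)
  have hAH : ∀ i, A i ⊆ H ∩ E i := fun i =>
    Set.subset_inter ((Set.subset_iUnion A i).trans (subset_toMeasurable _ _)) (hAE i)
  have hHE_disj : Pairwise (Function.onFun (AEDisjoint μ) fun i => H ∩ E i) :=
    fun i j hij => (hEdisj hij).mono Set.inter_subset_right Set.inter_subset_right
  calc ∑' i, μ (A i) ≤ ∑' i, μ (H ∩ E i) := ENNReal.tsum_le_tsum fun i => measure_mono (hAH i)
    _ = μ (⋃ i, H ∩ E i) :=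
      (measure_iUnion₀ hHE_disj fun i => (measurableSet_toMeasurable _ _).nullMeasurableSet.inter
        (hE i)).symm
    _ ≤ μ H := measure_mono (Set.iUnion_subset fun i => Set.inter_subset_left)
    _ = μ (⋃ i, A i) := measure_toMeasurable _

theorem fullness_preserving_union_general (g : ℝ → ℝ) (S : Set ℝ)
    (n : ℕ) (P : Fin n → Set ℝ)
    (hPcover : (⋃ i, P i) = S)
    (hfp : ∀ i, ∀ W ⊆ P i, volume W = volume (P i) →
      volume (g '' W) = volume (g '' (P i)))
    (E : Fin n → Set ℝ) (hE : ∀ i, MeasurableSet (E i))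
    (hEsub : ∀ i, g '' (P i) ⊆ E i)
    (hEdisj : ∀ i j, i ≠ j → volume (E i ∩ E j) = 0)
    (W : Set ℝ) (hW : W ⊆ S) (hWfull : ∀ i, volume (W ∩ P i) = volume (P i)) :
    volume (g '' W) = volume (g '' S) := by
  have hgW : g '' W = ⋃ i, g '' (W ∩ P i) := by
    rw [← Set.image_iUnion, ← Set.inter_iUnion, hPcover, Set.inter_eq_left.mpr hW]
  have hgS : g '' S = ⋃ i, g '' (P i) := by
    rw [← hPcover, Set.image_iUnion]
  have hE₀ : ∀ i, NullMeasurableSet (E i) volume := fun i => (hE i).nullMeasurableSet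
  rw [hgW, hgS,
    measure_iUnion_of_subset_aedisjoint_envelopes volume hE₀
      (fun i => (Set.image_mono Set.inter_subset_right).trans (hEsub i)) hEdisj,
    measure_iUnion_of_subset_aedisjoint_envelopes volume hE₀ hEsub hEdisj]
  exact tsum_congr fun i => hfp i (W ∩ P i) Set.inter_subset_right (hWfull i)

theorem fullness_preserving_union (g : ℝ → ℝ) (S : Set ℝ) (hS : volume S < ⊤)
    (n : ℕ) (hn : 1 ≤ n) (P : Fin n → Set ℝ)
    (hPsub : ∀ i, P i ⊆ S) (hPdisj : (Set.univ : Set (Fin n)).PairwiseDisjoint P)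
    (hPcover : (⋃ i, P i) = S)
    (hfp : ∀ i, ∀ W ⊆ P i, volume W = volume (P i) →
      volume (g '' W) = volume (g '' (P i)))
    (himgdisj : (Set.univ : Set (Fin n)).PairwiseDisjoint (fun i => g '' (P i)))
    (E : Fin n → Set ℝ) (hE : ∀ i, MeasurableSet (E i))
    (hEsub : ∀ i, g '' (P i) ⊆ E i)
    (hEenv : ∀ i, ∀ F : Set ℝ, MeasurableSet F → F ⊆ E i \ (g '' (P i)) →
      volume F = 0)
    (hEdisj : ∀ i j, i ≠ j → volume (E i ∩ E j) = 0)
    (W : Set ℝ) (hW : W ⊆ S) (hWfull : ∀ i, volume (W ∩ P i) = volume (P i)) :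
    volume (g '' W) = volume (g '' S) :=
  fullness_preserving_union_general g S n P hPcover hfp E hE hEsub hEdisj W hW hWfull
end
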